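/- arXiv:1202.2878 — 5 statements merged into one kernel-verified Lean document; each statement's English description precedes it below -/
import Mathlib

section
/- Let e_n be a sequence of càdlàg functions from [0,∞) to a Polish space V that are excursions (i.e., e_n(t) = a for all finite t ≥ T(e_n), where T(f) = inf{t > 0 : f(t) = a}), and let e be a càdlàg function. If e_n → e in the Skorokhod J1 topology, then T(e) ≤ liminf_n T(e_n). -/
open scoped NNReal ENNReal Topology
open Filter Set

noncomputable section

/-- A càdlàg function `[0,∞) → V`: right-continuous with left limits
(at every positive time). -/
def Cadlag {V : Type*} [PseudoMetricSpace V] (f : ℝ≥0 → V) : Prop :=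
  (∀ t : ℝ≥0, ContinuousWithinAt f (Set.Ici t) t) ∧
  ∀ t : ℝ≥0, 0 < t → ∃ l : V, Filter.Tendsto f (nhdsWithin t (Set.Iio t)) (nhds l)

/-- A time change: an increasing bijection of `[0,∞)`. -/
def IsTimeChange (l : ℝ≥0 → ℝ≥0) : Prop := StrictMono l ∧ Function.Bijective l

/-- Convergence in the Skorokhod J1 topology, along a filter `F`: there are
time changes `l i` with `‖l i − Id‖_∞ → 0` and uniform convergence of
`f i ∘ l i` to `g` on `[0,m]` for every `m` in some unbounded set. -/
def J1Tendsto {V : Type*} [PseudoMetricSpace V] {ι : Type*} (F : Filter ι)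
    (f : ι → ℝ≥0 → V) (g : ℝ≥0 → V) : Prop :=
  ∃ l : ι → ℝ≥0 → ℝ≥0, (∀ i, IsTimeChange (l i)) ∧
    Filter.Tendsto (fun i => ⨆ s : ℝ≥0, edist (l i s) s) F (nhds 0) ∧
    ∃ M : Set ℝ≥0, (∀ r : ℝ≥0, ∃ m ∈ M, r ≤ m) ∧
      ∀ m ∈ M, Filter.Tendsto
        (fun i => ⨆ s : Set.Icc (0:ℝ≥0) m, edist (f i (l i (s:ℝ≥0))) (g (s:ℝ≥0)))
        F (nhds 0)

/-- First hitting time of `a` : `T(f) = inf{t > 0 : f t = a} ∈ [0,∞]`. -/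
def hitTime {V : Type*} [PseudoMetricSpace V] (a : V) (f : ℝ≥0 → V) : ℝ≥0∞ :=
  sInf ((fun t : ℝ≥0 => (t : ℝ≥0∞)) '' {t : ℝ≥0 | 0 < t ∧ f t = a})

/-- An excursion: a càdlàg path which sticks at `a` from its first hitting
time of `a` on. -/
def IsExcursion {V : Type*} [PseudoMetricSpace V] (a : V) (f : ℝ≥0 → V) : Prop :=
  Cadlag f ∧ ∀ t : ℝ≥0, hitTime a f ≤ (t : ℝ≥0∞) → f t = a

end

/-! The time changes `l n` converge pointwise to the identity, so for each `s > c` the paths `e n`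
are read at times `l n s > c` along which `g s` is a pointwise limit. If `T(e n) < c` for
infinitely many `n`, then `e n (l n s) = a` for infinitely many `n`, because excursions stay at
`a` after their hitting time; hence `g s = a`. So `g` sits at `a` on `(c, ∞)` and `T(g) ≤ c`. -/

theorem hitTime_le_of_forall_lt_apply_eq {V : Type*} [PseudoMetricSpace V] {a : V}
    {f : ℝ≥0 → V} {c : ℝ≥0} (hf : ∀ s, c < s → f s = a) : hitTime a f ≤ c := by
  refine ENNReal.le_of_forall_pos_le_add fun ε hε _ => ?_
  rw [← ENNReal.coe_add]
  exact sInf_le ⟨c + ε, ⟨hε.trans_le le_add_self, hf _ (lt_add_of_pos_right c hε)⟩, rfl⟩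

theorem J1Tendsto.exists_tendsto_apply {V : Type*} [PseudoMetricSpace V] {ι : Type*}
    {F : Filter ι} {f : ι → ℝ≥0 → V} {g : ℝ≥0 → V} (h : J1Tendsto F f g) :
    ∃ l : ι → ℝ≥0 → ℝ≥0, (∀ s, Tendsto (fun i => l i s) F (𝓝 s)) ∧
      ∀ s, Tendsto (fun i => f i (l i s)) F (𝓝 (g s)) := by
  obtain ⟨l, -, hl, M, hM, hfl⟩ := h
  refine ⟨l, fun s => ?_, fun s => ?_⟩
  · rw [tendsto_iff_edist_tendsto_0]
    exact tendsto_of_tendsto_of_tendsto_of_le_of_le tendsto_const_nhds hl (fun _ => zero_le)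
      fun i => le_iSup (fun t => edist (l i t) t) s
  · obtain ⟨m, hmM, hsm⟩ := hM s
    rw [tendsto_iff_edist_tendsto_0]
    exact tendsto_of_tendsto_of_tendsto_of_le_of_le tendsto_const_nhds (hfl m hmM)
      (fun _ => zero_le) fun i =>
        le_iSup (fun t : Set.Icc (0 : ℝ≥0) m => edist (f i (l i t)) (g t)) ⟨s, zero_le, hsm⟩

theorem statement0_general {V : Type*} [MetricSpace V] (a : V)
    (e : ℕ → ℝ≥0 → V) (g : ℝ≥0 → V)
    (he : ∀ n, IsExcursion a (e n))
    (hconv : J1Tendsto Filter.atTop e g) :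
    hitTime a g ≤ Filter.liminf (fun n => hitTime a (e n)) Filter.atTop := by
  obtain ⟨l, hl, hel⟩ := hconv.exists_tendsto_apply
  refine le_of_forall_gt fun c hc => ?_
  obtain ⟨c', hc'liminf, hc'c⟩ := ENNReal.lt_iff_exists_nnreal_btwn.1 hc
  have hfreq : ∃ᶠ n in atTop, hitTime a (e n) < c' :=
    frequently_lt_of_liminf_lt (by isBoundedDefault) hc'liminf
  refine lt_of_le_of_lt (hitTime_le_of_forall_lt_apply_eq fun s hs => ?_) hc'c
  have hlate : ∀ᶠ n in atTop, c' < l n s := (hl s).eventually (lt_mem_nhds hs)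
  refine isClosed_singleton.mem_of_frequently_of_tendsto ?_ (hel s)
  exact (hfreq.and_eventually hlate).mono fun n ⟨hhit, hlt⟩ =>
    (he n).2 _ (hhit.trans (ENNReal.coe_lt_coe.2 hlt)).le

/-- if excursions `e n` converge in J1 to a càdlàg `g`, then
`T(g) ≤ liminf_n T(e n)`. -/
theorem statement0 {V : Type*} [MetricSpace V] [PolishSpace V] (a : V)
    (e : ℕ → ℝ≥0 → V) (g : ℝ≥0 → V)
    (he : ∀ n, IsExcursion a (e n)) (hg : Cadlag g)
    (hconv : J1Tendsto Filter.atTop e g) :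
    hitTime a g ≤ Filter.liminf (fun n => hitTime a (e n)) Filter.atTop :=
  statement0_general a e g he hconv
end

section
/- Define the concatenation map C : D × [0,∞) × D → D by C(f,t,h)(s) = f(s) if s < t and h(s−t) if s ≥ t. If f_n → f and h_n → h in the J1 topology, t_n → t with t > 0, and the jump sizes Δf_n(t_n) → Δf(t) (where Δf(t) = v(f(t), f(t−))), then C(f_n, t_n, h_n) → C(f, t, h) in the J1 topology. -/
open scoped NNReal ENNReal Topology
open Filter Set

noncomputable section

/-- Concatenation `C(f,t,h)(s) = f s` for `s < t`, `h (s−t)` for `s ≥ t`. -/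
def concatMap {V : Type*} (f : ℝ≥0 → V) (t : ℝ≥0) (h : ℝ≥0 → V) : ℝ≥0 → V :=
  fun s => if s < t then f s else h (s - t)

/-- Jump size `Δf(t) = v(f t, f(t−))` (with `f(0−) = f 0`). -/
def jumpSize {V : Type*} [PseudoMetricSpace V] (f : ℝ≥0 → V) (t : ℝ≥0) : ℝ :=
  dist (f t) (Function.leftLim f t)

end

/-!
Let `lₙ`, `μₙ` be time changes realising `fₙ → F` and `hₙ → H`, and let `cₙ := lₙ⁻¹(tₙ)`, so
`cₙ → t₀`. The new time change is `lₙ ∘ σₙ` before `t₀` and `tₙ + μₙ(· − t₀)` after it, where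
`σₙ` is the identity up to some `aₙ ↑ t₀` and then linear, sending `t₀` to `cₙ`. After `t₀` this
is exactly the convergence `hₙ → H`. Before `t₀`, the only danger is `cₙ > t₀`, when `σₙ`
carries points just left of `t₀` to points just right of it, where `F` is close to `F t₀`
rather than to `F (t₀−)`. But then `fₙ ∘ lₙ` is uniformly close to `F t₀` on `(t₀, cₙ]`, so the
jump of `fₙ` at `tₙ` is small, and by hypothesis so is the jump `v(F t₀, F (t₀−))` of `F`.
-/

open Filter Set

lemma TendstoUniformlyOn.union {α β ι : Type*} [UniformSpace β] {F : ι → α → β} {f : α → β}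
    {p : Filter ι} {s s' : Set α} (h : TendstoUniformlyOn F f p s)
    (h' : TendstoUniformlyOn F f p s') : TendstoUniformlyOn F f p (s ∪ s') := by
  intro u hu
  filter_upwards [h u hu, h' u hu] with n hn hn' x hx
  exact hx.elim (hn x) (hn' x)

lemma tendsto_iSup_edist_nhds_zero_iff {ι α β : Type*} [PseudoEMetricSpace β] {p : Filter ι}
    {u : ι → α → β} {v : α → β} {S : Set α} :
    Tendsto (fun i => ⨆ s : S, edist (u i s) (v s)) p (𝓝 0) ↔ TendstoUniformlyOn u v p S := by
  rw [ENNReal.tendsto_nhds_zero, EMetric.tendstoUniformlyOn_iff]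
  constructor
  · intro h ε hε
    obtain ⟨δ, hδ, hδε⟩ := exists_between hε
    filter_upwards [h δ hδ] with i hi x hx
    rw [edist_comm]
    exact ((le_iSup (fun s : S => edist (u i s) (v s)) ⟨x, hx⟩).trans hi).trans_lt hδε
  · intro h ε hε
    filter_upwards [h ε hε] with i hi
    exact iSup_le fun s => by rw [edist_comm]; exact (hi s s.2).le

lemma NNReal.edist_add_add_le (a b c d : ℝ≥0) : edist (a + b) (c + d) ≤ edist a c + edist b d :=
  _root_.edist_add_add_le (a : ℝ) b c d

section J1

variable {V ι : Type*} [PseudoMetricSpace V] {F : Filter ι} {f : ι → ℝ≥0 → V} {g : ℝ≥0 → V}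

lemma j1Tendsto_iff :
    J1Tendsto F f g ↔ ∃ l : ι → ℝ≥0 → ℝ≥0, (∀ i, IsTimeChange (l i)) ∧
      Tendsto (fun i => ⨆ s, edist (l i s) s) F (𝓝 0) ∧
      ∃ M : Set ℝ≥0, (∀ r, ∃ m ∈ M, r ≤ m) ∧
        ∀ m ∈ M, TendstoUniformlyOn (fun i s => f i (l i s)) g F (Icc 0 m) :=
  exists_congr fun l => and_congr_right fun _ => and_congr_right fun _ =>
    exists_congr fun _ => and_congr_right fun _ => forall₂_congr fun _ _ =>
      tendsto_iSup_edist_nhds_zero_iff (u := fun i s => f i (l i s))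

lemma j1Tendsto_of_eventually (l : ι → ℝ≥0 → ℝ≥0) (hl : ∀ᶠ i in F, IsTimeChange (l i))
    (hdist : Tendsto (fun i => ⨆ s, edist (l i s) s) F (𝓝 0)) (M : Set ℝ≥0)
    (hM : ∀ r, ∃ m ∈ M, r ≤ m)
    (hconv : ∀ m ∈ M, TendstoUniformlyOn (fun i s => f i (l i s)) g F (Icc 0 m)) :
    J1Tendsto F f g := by
  classical
  set l' : ι → ℝ≥0 → ℝ≥0 := fun i => if IsTimeChange (l i) then l i else id
  have hl' : ∀ᶠ i in F, l i = l' i := hl.mono fun i hi => (if_pos hi).symm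
  refine j1Tendsto_iff.2
    ⟨l', fun i => ?_, hdist.congr' ?_, M, hM, fun m hm => (hconv m hm).congr ?_⟩
  · by_cases hi : IsTimeChange (l i)
    · simpa only [l', if_pos hi] using hi
    · simpa only [l', if_neg hi] using ⟨strictMono_id, Function.bijective_id⟩
  · filter_upwards [hl'] with i hi
    rw [hi]
  · filter_upwards [hl'] with i hi s _
    rw [hi]

end J1

lemma IsTimeChange.comp {l m : ℝ≥0 → ℝ≥0} (hl : IsTimeChange l) (hm : IsTimeChange m) :
    IsTimeChange (l ∘ m) :=
  ⟨hl.1.comp hm.1, hl.2.comp hm.2⟩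

lemma tendsto_of_tendsto_timeChange {ι : Type*} {p : Filter ι} {l : ι → ℝ≥0 → ℝ≥0}
    {c : ι → ℝ≥0} {t0 : ℝ≥0} (hl : Tendsto (fun i => ⨆ s, edist (l i s) s) p (𝓝 0))
    (hlc : Tendsto (fun i => l i (c i)) p (𝓝 t0)) : Tendsto c p (𝓝 t0) := by
  rw [tendsto_iff_edist_tendsto_0] at hlc ⊢
  refine tendsto_of_tendsto_of_tendsto_of_le_of_le tendsto_const_nhds
    (by simpa using hl.add hlc) (fun _ => zero_le) fun i => ?_
  calc edist (c i) t0 ≤ edist (l i (c i)) (c i) + edist (l i (c i)) t0 := edist_triangle_left _ _ _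
    _ ≤ (⨆ s, edist (l i s) s) + edist (l i (c i)) t0 :=
      add_le_add_left (le_iSup (fun s => edist (l i s) s) (c i)) _

noncomputable def stretch (a b c s : ℝ≥0) : ℝ≥0 :=
  if s ≤ a then s else a + (s - a) * ((c - a) / (b - a))

section stretch

variable {a b c s : ℝ≥0}

lemma stretch_of_le (h : s ≤ a) : stretch a b c s = s := if_pos h

lemma stretch_of_lt (h : a < s) : stretch a b c s = a + (s - a) * ((c - a) / (b - a)) :=
  if_neg h.not_ge

lemma stretch_right (hab : a < b) (hac : a ≤ c) : stretch a b c b = c := by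
  rw [stretch_of_lt hab, mul_div_cancel₀ _ (tsub_pos_of_lt hab).ne', add_tsub_cancel_of_le hac]

variable (hab : a < b) (hac : a < c)
include hab hac

lemma strictMono_stretch : StrictMono (stretch a b c) := by
  have hk : 0 < (c - a) / (b - a) := div_pos (tsub_pos_of_lt hac) (tsub_pos_of_lt hab)
  intro s₁ s₂ h
  rcases le_or_gt s₂ a with h₂ | h₂
  · rwa [stretch_of_le (h.le.trans h₂), stretch_of_le h₂]
  rw [stretch_of_lt h₂]
  rcases le_or_gt s₁ a with h₁ | h₁
  · rw [stretch_of_le h₁]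
    exact h₁.trans_lt (lt_add_of_pos_right a (mul_pos (tsub_pos_of_lt h₂) hk))
  · rw [stretch_of_lt h₁]
    gcongr
    exact tsub_lt_tsub_right_of_le h₁.le h

lemma surjective_stretch : Function.Surjective (stretch a b c) := by
  have hk : (c - a) / (b - a) ≠ 0 := (div_pos (tsub_pos_of_lt hac) (tsub_pos_of_lt hab)).ne'
  intro y
  rcases le_or_gt y a with hy | hy
  · exact ⟨y, stretch_of_le hy⟩
  refine ⟨a + (y - a) / ((c - a) / (b - a)), ?_⟩
  have hpos : 0 < (y - a) / ((c - a) / (b - a)) :=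
    div_pos (tsub_pos_of_lt hy) (pos_iff_ne_zero.2 hk)
  rw [stretch_of_lt (lt_add_of_pos_right a hpos), add_tsub_cancel_left, div_mul_cancel₀ _ hk,
    add_tsub_cancel_of_le hy.le]

lemma isTimeChange_stretch : IsTimeChange (stretch a b c) :=
  ⟨strictMono_stretch hab hac, (strictMono_stretch hab hac).injective, surjective_stretch hab hac⟩

lemma nndist_stretch_le (hs : s ≤ b) : nndist (stretch a b c s) s ≤ max (b - a) (c - a) := by
  rcases le_or_gt s a with hsa | hsa
  · simp [stretch_of_le hsa]
  have hσc : stretch a b c s ≤ c := by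
    simpa only [stretch_right hab hac.le] using (strictMono_stretch hab hac).monotone hs
  have haσ : a ≤ stretch a b c s := by
    simpa only [stretch_of_le le_rfl] using (strictMono_stretch hab hac).monotone hsa.le
  rw [NNReal.nndist_eq, max_comm (b - a)]
  exact max_le_max (tsub_le_tsub hσc hsa.le) (tsub_le_tsub hs haσ)

end stretch

noncomputable def glue (p m : ℝ≥0 → ℝ≥0) (b s : ℝ≥0) : ℝ≥0 :=
  if s < b then p s else p b + m (s - b)

section glue

variable {p m : ℝ≥0 → ℝ≥0} {b s : ℝ≥0}

lemma glue_of_lt (hs : s < b) : glue p m b s = p s := if_pos hs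

lemma glue_of_le (hs : b ≤ s) : glue p m b s = p b + m (s - b) := if_neg hs.not_gt

lemma IsTimeChange.glue (hp : IsTimeChange p) (hm : IsTimeChange m) (b : ℝ≥0) :
    IsTimeChange (_root_.glue p m b) := by
  have hmono : StrictMono (_root_.glue p m b) := by
    intro s₁ s₂ h
    rcases lt_or_ge s₂ b with h₂ | h₂
    · rw [glue_of_lt h₂, glue_of_lt (h.trans h₂)]
      exact hp.1 h
    rw [glue_of_le h₂]
    rcases lt_or_ge s₁ b with h₁ | h₁
    · rw [glue_of_lt h₁]
      exact (hp.1 h₁).trans_le le_self_add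
    · rw [glue_of_le h₁]
      exact add_lt_add_right (hm.1 (tsub_lt_tsub_right_of_le h₁ h)) _
  refine ⟨hmono, hmono.injective, fun y => ?_⟩
  rcases lt_or_ge y (p b) with hy | hy
  · obtain ⟨u, rfl⟩ := hp.2.2 y
    exact ⟨u, glue_of_lt (hp.1.lt_iff_lt.1 hy)⟩
  · obtain ⟨w, hw⟩ := hm.2.2 (y - p b)
    refine ⟨b + w, ?_⟩
    rw [glue_of_le le_self_add, add_tsub_cancel_left, hw, add_tsub_cancel_of_le hy]

lemma edist_glue_le {δ δ' : ℝ≥0∞} (hp : ∀ u ≤ b, edist (p u) u ≤ δ)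
    (hm : ∀ u, edist (m u) u ≤ δ') (s : ℝ≥0) : edist (glue p m b s) s ≤ δ + δ' := by
  rcases lt_or_ge s b with hs | hs
  · rw [glue_of_lt hs]
    exact (hp s hs.le).trans le_self_add
  · calc edist (glue p m b s) s = edist (p b + m (s - b)) (b + (s - b)) := by
          rw [glue_of_le hs, add_tsub_cancel_of_le hs]
      _ ≤ edist (p b) b + edist (m (s - b)) (s - b) := NNReal.edist_add_add_le _ _ _ _
      _ ≤ δ + δ' := add_le_add (hp b le_rfl) (hm _)

variable {V : Type*} {f h : ℝ≥0 → V}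

lemma concatMap_glue_of_lt (hp : StrictMono p) (hs : s < b) :
    concatMap f (p b) h (glue p m b s) = f (p s) := by
  rw [glue_of_lt hs, concatMap, if_pos (hp hs)]

lemma concatMap_glue_of_le (hs : b ≤ s) :
    concatMap f (p b) h (glue p m b s) = h (m (s - b)) := by
  rw [glue_of_le hs, concatMap, if_neg (not_lt.2 le_self_add), add_tsub_cancel_left]

end glue

lemma tendsto_iSup_edist_glue_stretch {ι : Type*} {F : Filter ι} {l μ : ι → ℝ≥0 → ℝ≥0}
    {a c : ι → ℝ≥0} {t0 : ℝ≥0}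
    (hl : Tendsto (fun i => ⨆ s, edist (l i s) s) F (𝓝 0))
    (hμ : Tendsto (fun i => ⨆ s, edist (μ i s) s) F (𝓝 0))
    (ha : Tendsto a F (𝓝 t0)) (hc : Tendsto c F (𝓝 t0))
    (hac : ∀ᶠ i in F, a i < t0 ∧ a i < c i) :
    Tendsto (fun i => ⨆ s, edist (glue (l i ∘ stretch (a i) t0 (c i)) (μ i) t0 s) s) F (𝓝 0) := by
  set D : ι → ℝ≥0∞ := fun i => ((max (t0 - a i) (c i - a i) : ℝ≥0) : ℝ≥0∞)
  have hD : Tendsto D F (𝓝 0) :=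
    ENNReal.tendsto_coe.2 (by simpa using ((tendsto_const_nhds (x := t0)).sub ha).max (hc.sub ha))
  refine tendsto_of_tendsto_of_tendsto_of_le_of_le' tendsto_const_nhds
    (by simpa using (hl.add hD).add hμ) (Eventually.of_forall fun _ => zero_le) ?_
  filter_upwards [hac] with i ⟨hat, hac⟩
  refine iSup_le (edist_glue_le (fun u hu => ?_) fun u => le_iSup (fun s => edist (μ i s) s) u)
  calc edist (l i (stretch (a i) t0 (c i) u)) u
      ≤ edist (l i (stretch (a i) t0 (c i) u)) (stretch (a i) t0 (c i) u)
        + edist (stretch (a i) t0 (c i) u) u := edist_triangle _ _ _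
    _ ≤ (⨆ s, edist (l i s) s) + D i := by
      gcongr
      · exact le_iSup (fun s => edist (l i s) s) _
      · rw [edist_nndist]
        exact ENNReal.coe_le_coe.2 (nndist_stretch_le hat hac hu)

lemma dist_comp_stretch_le {V : Type*} [PseudoMetricSpace V] {g F : ℝ≥0 → V} {FL : V} {r : ℝ}
    {lo a t0 c s : ℝ≥0}
    (hlo : lo ≤ a) (hat : a < t0) (hac : a < c) (hg : ∀ u < c, dist (g u) (F u) ≤ r)
    (hleft : ∀ u ∈ Ioo lo t0, dist (F u) FL ≤ r) (hright : ∀ u ∈ Ico t0 c, dist (F u) (F t0) ≤ r)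
    (hjump : t0 < c → dist (F t0) FL ≤ 5 * r) (hs : s < t0) :
    dist (g (stretch a t0 c s)) (F s) ≤ 8 * r := by
  have hr : 0 ≤ r := dist_nonneg.trans (hg a hac)
  set σ := stretch a t0 c s
  have hσc : σ < c := stretch_right hat hac.le ▸ strictMono_stretch hat hac hs
  have hgσ := hg σ hσc
  rcases le_or_gt s a with hsa | hsa
  · rw [show σ = s from stretch_of_le hsa] at hgσ ⊢
    linarith
  have haσ : a < σ := stretch_of_le (le_refl a) ▸ strictMono_stretch hat hac hsa
  have hFs : dist FL (F s) ≤ r := dist_comm FL (F s) ▸ hleft s ⟨hlo.trans_lt hsa, hs⟩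
  rcases lt_or_ge σ t0 with hσt | htσ
  · calc dist (g σ) (F s) ≤ dist (g σ) (F σ) + dist (F σ) FL + dist FL (F s) :=
          dist_triangle4 _ _ _ _
      _ ≤ r + r + r := by gcongr; exact hleft σ ⟨hlo.trans_lt haσ, hσt⟩
      _ ≤ 8 * r := by linarith
  · calc dist (g σ) (F s) ≤ dist (g σ) (F σ) + dist (F σ) (F t0) + dist (F t0) FL + dist FL (F s) :=
          (dist_triangle4 _ _ _ _).trans (by linarith [dist_triangle (F t0) FL (F s)])
      _ ≤ r + r + 5 * r + r := by
          gcongr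
          exacts [hright σ ⟨htσ, hσc⟩, hjump (htσ.trans_lt hσc)]
      _ = 8 * r := by ring

section MetricSpace

variable {V : Type*} [MetricSpace V]

lemma jumpSize_eq_dist_of_tendsto {f : ℝ≥0 → V} {t : ℝ≥0} {y : V} (ht : 0 < t)
    (hf : Tendsto f (𝓝[<] t) (𝓝 y)) : jumpSize f t = dist (f t) y := by
  have : (𝓝[<] t).NeBot := nhdsLT_neBot_of_exists_lt ⟨0, ht⟩
  rw [jumpSize, leftLim_eq_of_tendsto hf]

lemma jumpSize_le_of_eventually_dist_le {f : ℝ≥0 → V} {t : ℝ≥0} {x : V} {ε : ℝ}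
    (hf : ∀ᶠ u in 𝓝[≤] t, dist (f u) x ≤ ε) : jumpSize f t ≤ 2 * ε := by
  have hft : dist (f t) x ≤ ε := hf.self_of_nhdsWithin (mem_Iic.2 le_rfl)
  -- `leftLim f t` is `f t` itself when `f` has no left limit at `t`
  have hleft : dist (Function.leftLim f t) x ≤ ε := by
    by_cases hlim : (𝓝[<] t).NeBot ∧ ∃ y, Tendsto f (𝓝[<] t) (𝓝 y)
    · obtain ⟨hne, y, hy⟩ := hlim
      rw [leftLim_eq_of_tendsto hy]
      exact le_of_tendsto (hy.dist tendsto_const_nhds)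
        (hf.filter_mono (nhdsWithin_mono _ Iio_subset_Iic_self))
    · rcases not_and_or.1 hlim with h | h
      · rwa [leftLim_eq_of_eq_bot f (not_neBot.1 h)]
      · rwa [leftLim_eq_of_not_tendsto f h]
  calc jumpSize f t ≤ dist (f t) x + dist (Function.leftLim f t) x := dist_triangle_right _ _ _
    _ ≤ 2 * ε := by linarith

lemma jumpSize_le_of_forall_Ioc {f : ℝ≥0 → V} {l : ℝ≥0 → ℝ≥0} (hl : IsTimeChange l)
    {b c : ℝ≥0} {x : V} {ε : ℝ} (hbc : b < c) (hf : ∀ u ∈ Ioc b c, dist (f (l u)) x ≤ ε) :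
    jumpSize f (l c) ≤ 2 * ε := by
  refine jumpSize_le_of_eventually_dist_le (x := x) ?_
  filter_upwards [Ioc_mem_nhdsLE (hl.1 hbc)] with u hu
  obtain ⟨w, rfl⟩ := hl.2.2 u
  exact hf w ⟨hl.1.lt_iff_lt.1 hu.1, hl.1.le_iff_le.1 hu.2⟩

lemma tendstoUniformlyOn_comp_stretch {f : ℕ → ℝ≥0 → V} {F : ℝ≥0 → V} {l : ℕ → ℝ≥0 → ℝ≥0}
    {a c : ℕ → ℝ≥0} {t0 m : ℝ≥0} (hFc : Cadlag F) (ht0 : 0 < t0) (hm : t0 < m)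
    (hl : ∀ n, IsTimeChange (l n))
    (hfF : TendstoUniformlyOn (fun n u => f n (l n u)) F atTop (Icc 0 m))
    (ha : Tendsto a atTop (𝓝 t0)) (hc : Tendsto c atTop (𝓝 t0))
    (hac : ∀ᶠ n in atTop, a n < t0 ∧ a n < c n)
    (hjump : Tendsto (fun n => jumpSize (f n) (l n (c n))) atTop (𝓝 (jumpSize F t0))) :
    TendstoUniformlyOn (fun n s => f n (l n (stretch (a n) t0 (c n) s))) F atTop (Iio t0) := by
  rw [Metric.tendstoUniformlyOn_iff]
  intro ε hε
  obtain ⟨r, hr, hrε⟩ : ∃ r : ℝ, 0 < r ∧ 8 * r < ε := ⟨ε / 9, by positivity, by linarith⟩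
  obtain ⟨FL, hFL⟩ := hFc.2 t0 ht0
  obtain ⟨lo, hlo, hleft⟩ := (mem_nhdsLT_iff_exists_Ioo_subset' ht0).1
    (hFL (Metric.closedBall_mem_nhds FL hr))
  obtain ⟨hi, hhi, hright⟩ := mem_nhdsGE_iff_exists_Ico_subset.1
    (hFc.1 t0 (Metric.closedBall_mem_nhds (F t0) hr))
  filter_upwards [hac, Metric.tendstoUniformlyOn_iff.1 hfF r hr, ha.eventually (lt_mem_nhds hlo),
    hc.eventually (gt_mem_nhds (lt_min hhi hm)), hjump.eventually (Metric.closedBall_mem_nhds _ hr)]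
    with n ⟨hat, hac⟩ hfn hloa hcn hjn s hs
  have hg : ∀ u ≤ c n, dist (f n (l n u)) (F u) ≤ r := fun u hu =>
    (dist_comm (F u) _ ▸ hfn u ⟨zero_le, hu.trans (hcn.le.trans (min_le_right _ _))⟩).le
  have hright' : ∀ u ∈ Ico t0 (c n), dist (F u) (F t0) ≤ r := fun u hu =>
    hright ⟨hu.1, hu.2.trans (hcn.trans_le (min_le_left _ _))⟩
  have hjump' (htc : t0 < c n) : dist (F t0) FL ≤ 5 * r := by
    have hfn_jump : jumpSize (f n) (l n (c n)) ≤ 2 * (r + r) :=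
      jumpSize_le_of_forall_Ioc (hl n) htc fun u hu =>
        (dist_triangle _ (F u) _).trans (add_le_add (hg u hu.2)
          (hright ⟨hu.1.le, hu.2.trans_lt (hcn.trans_le (min_le_left _ _))⟩))
    rw [← jumpSize_eq_dist_of_tendsto ht0 hFL]
    linarith [(abs_le.1 (Real.dist_eq _ _ ▸ Metric.mem_closedBall.1 hjn)).1]
  rw [dist_comm]
  exact (dist_comp_stretch_le hloa.le hat hac (fun u hu => hg u hu.le) (fun u hu => hleft hu)
    hright' hjump' hs).trans_lt hrε

end MetricSpace

lemma tendstoUniformlyOn_concatMap_glue {V ι : Type*} [UniformSpace V] {F : Filter ι}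
    {f h : ι → ℝ≥0 → V} {G H : ℝ≥0 → V} {p m : ι → ℝ≥0 → ℝ≥0} {b T : ℝ≥0}
    (hp : ∀ᶠ i in F, StrictMono (p i))
    (hf : TendstoUniformlyOn (fun i s => f i (p i s)) G F (Iio b))
    (hh : TendstoUniformlyOn (fun i s => h i (m i s)) H F (Icc 0 T)) :
    TendstoUniformlyOn (fun i s => concatMap (f i) (p i b) (h i) (glue (p i) (m i) b s))
      (concatMap G b H) F (Icc 0 (b + T)) := by
  set Φ := fun i s => concatMap (f i) (p i b) (h i) (glue (p i) (m i) b s)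
  have hbefore : TendstoUniformlyOn Φ (concatMap G b H) F (Iio b) :=
    (hf.congr (hp.mono fun i hpi s hs => (concatMap_glue_of_lt hpi hs).symm)).congr_right
      fun s hs => (if_pos hs).symm
  have hafter : TendstoUniformlyOn Φ (concatMap G b H) F (Icc b (b + T)) :=
    (((hh.comp (· - b)).mono fun s hs => ⟨zero_le, tsub_le_iff_left.2 hs.2⟩).congr
      (Eventually.of_forall fun i s hs => (concatMap_glue_of_le hs.1).symm)).congr_right
      fun s hs => (if_neg (not_lt.2 hs.1)).symm
  refine (hbefore.union hafter).mono fun s hs => ?_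
  rcases lt_or_ge s b with hsb | hsb
  exacts [Or.inl hsb, Or.inr ⟨hsb, hs.2⟩]

lemma exists_tendsto_lt_of_tendsto {c : ℕ → ℝ≥0} {t0 : ℝ≥0} (ht0 : 0 < t0)
    (hc : Tendsto c atTop (𝓝 t0)) :
    ∃ a : ℕ → ℝ≥0, Tendsto a atTop (𝓝 t0) ∧ ∀ᶠ n in atTop, a n < t0 ∧ a n < c n := by
  refine ⟨fun n => min (c n) t0 - 1 / (n + 1), ?_, ?_⟩
  · simpa using (hc.min (tendsto_const_nhds (x := t0))).sub
      (tendsto_one_div_add_atTop_nhds_zero_nat (𝕜 := ℝ≥0))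
  · filter_upwards [hc.eventually (lt_mem_nhds ht0)] with n hcn
    have : min (c n) t0 - 1 / (n + 1) < min (c n) t0 :=
      tsub_lt_self (lt_min hcn ht0) (by positivity)
    exact ⟨this.trans_le (min_le_right _ _), this.trans_le (min_le_left _ _)⟩

theorem statement1_general {V : Type*} [MetricSpace V]
    (f h : ℕ → ℝ≥0 → V) (F H : ℝ≥0 → V) (t : ℕ → ℝ≥0) (t0 : ℝ≥0)
    (hFc : Cadlag F)
    (ht0 : 0 < t0) (ht : Filter.Tendsto t Filter.atTop (nhds t0))
    (hfF : J1Tendsto Filter.atTop f F) (hhH : J1Tendsto Filter.atTop h H)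
    (hjump : Filter.Tendsto (fun n => jumpSize (f n) (t n)) Filter.atTop
      (nhds (jumpSize F t0))) :
    J1Tendsto Filter.atTop (fun n => concatMap (f n) (t n) (h n))
      (concatMap F t0 H) := by
  obtain ⟨l, hl, hl_id, Mf, hMf, hfF⟩ := j1Tendsto_iff.1 hfF
  obtain ⟨μ, hμ, hμ_id, Mh, hMh, hhH⟩ := j1Tendsto_iff.1 hhH
  obtain ⟨m, hmM, hm⟩ := hMf (t0 + 1)
  choose c hlc using fun n => (hl n).2.2 (t n)
  have hc : Tendsto c atTop (𝓝 t0) := tendsto_of_tendsto_timeChange hl_id (by simpa [hlc] using ht)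
  obtain ⟨a, ha, hac⟩ := exists_tendsto_lt_of_tendsto ht0 hc
  set p : ℕ → ℝ≥0 → ℝ≥0 := fun n => l n ∘ stretch (a n) t0 (c n)
  have hp : ∀ᶠ n in atTop, IsTimeChange (p n) ∧ p n t0 = t n := by
    filter_upwards [hac] with n ⟨hat, hac⟩
    exact ⟨(hl n).comp (isTimeChange_stretch hat hac),
      hlc n ▸ congrArg (l n) (stretch_right hat hac.le)⟩
  have hbefore := tendstoUniformlyOn_comp_stretch hFc ht0 (lt_of_lt_of_le (lt_add_one t0) hm) hl
    (hfF m hmM) ha hc hac (by simpa [hlc] using hjump)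
  refine j1Tendsto_of_eventually (fun n => glue (p n) (μ n) t0)
    (hp.mono fun n hpn => hpn.1.glue (hμ n) t0)
    (tendsto_iSup_edist_glue_stretch hl_id hμ_id ha hc hac) ((t0 + ·) '' Mh)
    (fun r => let ⟨m', hm', hrm'⟩ := hMh r
      ⟨t0 + m', mem_image_of_mem _ hm', hrm'.trans le_add_self⟩) ?_
  rintro _ ⟨m', hm', rfl⟩
  refine (tendstoUniformlyOn_concatMap_glue (hp.mono fun n hpn => hpn.1.1) hbefore
    (hhH m' hm')).congr ?_
  filter_upwards [hp] with n hpn s _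
  rw [hpn.2]

/-- continuity of the concatenation map. -/
theorem statement1 {V : Type*} [MetricSpace V] [PolishSpace V]
    (f h : ℕ → ℝ≥0 → V) (F H : ℝ≥0 → V) (t : ℕ → ℝ≥0) (t0 : ℝ≥0)
    (hfc : ∀ n, Cadlag (f n)) (hhc : ∀ n, Cadlag (h n))
    (hFc : Cadlag F) (hHc : Cadlag H)
    (ht0 : 0 < t0) (ht : Filter.Tendsto t Filter.atTop (nhds t0))
    (hfF : J1Tendsto Filter.atTop f F) (hhH : J1Tendsto Filter.atTop h H)
    (hjump : Filter.Tendsto (fun n => jumpSize (f n) (t n)) Filter.atTop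
      (nhds (jumpSize F t0))) :
    J1Tendsto Filter.atTop (fun n => concatMap (f n) (t n) (h n))
      (concatMap F t0 H) :=
  statement1_general f h F H t t0 hFc ht0 ht hfF hhH hjump
end

section
/- For any càdlàg function f : [0,∞) → V and any m, δ > 0, there are only finitely many excursion intervals of f starting before m on which the supremum of the distance to a is at least δ. Consequently, if Φ_ε denotes the operator that replaces by the constant a all excursions e of f with φ(e) ≤ ε (where φ : E → [0,∞] satisfies φ(e) > 0 iff e ≠ the trivial excursion), then sup_{[0,m]} v(Φ_ε(f)(t), f(t)) → 0 as ε → 0, and hence Φ_ε(f) → f in the J1 topology as ε → 0. -/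
/-!
A càdlàg path cannot alternate infinitely often, on a bounded time interval, between the
value `a` and values `δ`-far from `a`: at an accumulation point of the alternation a one-sided
limit of the path would have to be both equal to `a` and `δ`-far from it. Hence only finitely
many excursions starting before `m` reach height `δ`. Since `φ` is positive on each of them,
once `ε` is below the least of these finitely many values `Φ_ε` erases on `[0, m]` only
excursions of height `< δ`, so `Φ_ε f` is uniformly `δ`-close to `f` there. J1 convergence
follows with the identity time change.
-/

open scoped NNReal ENNReal Topology
open Filter Set

noncomputable section

/-- Left endpoint of the excursion interval of `f` (away from `a`) straddling `t`. -/
def gLeft {V : Type*} [PseudoMetricSpace V] (a : V) (f : ℝ≥0 → V) (t : ℝ≥0) : ℝ≥0 :=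
  sSup {s : ℝ≥0 | s ≤ t ∧ f s = a}

/-- Right endpoint (in `[0,∞]`) of the excursion interval of `f` straddling `t`. -/
def dRight {V : Type*} [PseudoMetricSpace V] (a : V) (f : ℝ≥0 → V) (t : ℝ≥0) : ℝ≥0∞ :=
  sInf ((fun s : ℝ≥0 => (s : ℝ≥0∞)) '' {s : ℝ≥0 | t < s ∧ f s = a})

open Classical in
/-- The excursion of `f` straddling `t`: the path shifted to the left endpoint
of the straddling excursion interval and stopped at the right endpoint. -/
def excAt {V : Type*} [PseudoMetricSpace V] (a : V) (f : ℝ≥0 → V) (t : ℝ≥0) :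
    ℝ≥0 → V :=
  fun s => if ((gLeft a f t + s : ℝ≥0) : ℝ≥0∞) < dRight a f t then f (gLeft a f t + s) else a

end

noncomputable section
open Classical in
/-- The truncation `Φ_ε` replacing every `ε`-small excursion of `f` by `a`:
`Φ_ε(f)(t) = f t` if the excursion straddling `t` has size `> ε`, else `a`. -/
def PhiTrunc {V : Type*} [PseudoMetricSpace V] (a : V)
    (φ : (ℝ≥0 → V) → ℝ≥0∞) (ε : ℝ≥0) (f : ℝ≥0 → V) : ℝ≥0 → V :=
  fun t => if (ε : ℝ≥0∞) < φ (excAt a f t) then f t else a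
end

theorem not_frequently_le_edist_of_tendsto {ι X : Type*} [PseudoEMetricSpace X]
    {F : Filter ι} {f : ι → X} {l a : X} {δ : ℝ≥0∞} (hl : Tendsto f F (𝓝 l))
    (ha : ∃ᶠ i in F, f i = a) (hδ : 0 < δ) : ¬ ∃ᶠ i in F, δ ≤ edist (f i) a := by
  intro hfar
  have hla : edist l a ≤ 0 :=
    (isClosed_le (continuous_id.edist continuous_const) continuous_const
      ).mem_of_frequently_of_tendsto (ha.mono fun i hi => by simp [hi]) hl
  have hδl : δ ≤ edist l a :=
    (isClosed_le continuous_const (continuous_id.edist continuous_const)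
      ).mem_of_frequently_of_tendsto hfar hl
  exact hδ.not_ge (hδl.trans hla)

section Separated

variable {α : Type*} [LinearOrder α] [TopologicalSpace α] [OrderTopology α] {x : α}
  {W Z : Set α}

theorem frequently_nhdsLT_of_forall_exists_between (hW : ∃ᶠ w in 𝓝[<] x, w ∈ W)
    (hsep : ∀ w ∈ W, ∀ w' ∈ W, w < w' → ∃ z ∈ Icc w w', z ∈ Z) :
    ∃ᶠ z in 𝓝[<] x, z ∈ Z := by
  obtain ⟨w, -, hwx⟩ := (hW.and_eventually self_mem_nhdsWithin).exists
  rw [(nhdsLT_basis_of_exists_lt ⟨w, hwx⟩).frequently_iff] at hW ⊢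
  intro i hi
  obtain ⟨w₁, hw₁, hw₁W⟩ := hW i hi
  obtain ⟨w₂, hw₂, hw₂W⟩ := hW w₁ hw₁.2
  obtain ⟨z, hz, hzZ⟩ := hsep w₁ hw₁W w₂ hw₂W hw₂.1
  exact ⟨z, ⟨hw₁.1.trans_le hz.1, hz.2.trans_lt hw₂.2⟩, hzZ⟩

theorem frequently_nhdsGT_of_forall_exists_between (hW : ∃ᶠ w in 𝓝[>] x, w ∈ W)
    (hsep : ∀ w ∈ W, ∀ w' ∈ W, w < w' → ∃ z ∈ Icc w w', z ∈ Z) :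
    ∃ᶠ z in 𝓝[>] x, z ∈ Z :=
  frequently_nhdsLT_of_forall_exists_between (α := αᵒᵈ) hW
    fun w hw w' hw' h => (hsep w' hw' w hw h).imp fun _ hz => ⟨⟨hz.1.2, hz.1.1⟩, hz.2⟩

end Separated

section Path

variable {V : Type*} [PseudoMetricSpace V] {a : V} {f : ℝ≥0 → V}

theorem Cadlag.comp_add_left (hf : Cadlag f) (g : ℝ≥0) : Cadlag fun s => f (g + s) := by
  refine ⟨fun s => (hf.1 (g + s)).comp (continuous_const_add g).continuousWithinAt
    fun s' hs' => add_le_add_right hs' g, fun s hs => ?_⟩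
  obtain ⟨l, hl⟩ := hf.2 (g + s) (hs.trans_le le_add_self)
  exact ⟨l, hl.comp <| (continuous_const_add g).continuousWithinAt.tendsto_nhdsWithin
    fun s' hs' => add_lt_add_right hs' g⟩

theorem Cadlag.ite_mem {I : Set ℝ≥0} [DecidablePred (· ∈ I)] (hf : Cadlag f) (hI : IsOpen I)
    (hIl : IsLowerSet I) : Cadlag fun s => if s ∈ I then f s else a := by
  refine ⟨fun s => ?_, fun s hs => ?_⟩
  · by_cases hsI : s ∈ I
    · refine (hf.1 s).congr_of_eventuallyEq ?_ (if_pos hsI)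
      filter_upwards [mem_nhdsWithin_of_mem_nhds (hI.mem_nhds hsI)] with s' hs' using if_pos hs'
    · exact continuousWithinAt_const.congr (fun s' hs' => if_neg fun h => hsI (hIl hs' h))
        (if_neg hsI)
  · by_cases hIio : Iio s ⊆ I
    · obtain ⟨l, hl⟩ := hf.2 s hs
      refine ⟨l, hl.congr' ?_⟩
      filter_upwards [self_mem_nhdsWithin] with s' hs' using (if_pos (hIio hs')).symm
    · obtain ⟨s₀, hs₀, hs₀I⟩ := not_subset.mp hIio
      refine ⟨a, tendsto_const_nhds.congr' ?_⟩
      filter_upwards [Ioo_mem_nhdsLT hs₀] with s' hs' using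
        (if_neg fun h => hs₀I (hIl hs'.1.le h)).symm

theorem Cadlag.finite_of_forall_exists_zero_between (hf : Cadlag f) {δ : ℝ≥0∞} (hδ : 0 < δ)
    {W : Set ℝ≥0} {m : ℝ≥0} (hWm : W ⊆ Iic m) (hfar : ∀ w ∈ W, δ ≤ edist (f w) a)
    (hsep : ∀ w ∈ W, ∀ w' ∈ W, w < w' → ∃ z ∈ Icc w w', f z = a) : W.Finite := by
  by_contra hW
  change W.Infinite at hW
  obtain ⟨x, -, hx⟩ :=
    hW.exists_accPt_of_subset_isCompact (isCompact_Icc (a := 0)) fun w hw => ⟨zero_le, hWm hw⟩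
  rw [accPt_iff_frequently_nhdsNE, ← nhdsLT_sup_nhdsGT, frequently_sup] at hx
  rcases hx with hleft | hright
  · obtain ⟨w, -, hwx⟩ := (hleft.and_eventually self_mem_nhdsWithin).exists
    obtain ⟨l, hl⟩ := hf.2 x (pos_of_gt hwx)
    exact not_frequently_le_edist_of_tendsto hl
      (frequently_nhdsLT_of_forall_exists_between hleft hsep) hδ (hleft.mono hfar)
  · exact not_frequently_le_edist_of_tendsto
      ((hf.1 x).mono_left (nhdsWithin_mono x Ioi_subset_Ici_self))
      (frequently_nhdsGT_of_forall_exists_between hright hsep) hδ (hright.mono hfar)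

end Path

theorem frequently_nhdsGT_of_sInf_coe_le {A : Set ℝ≥0} {r : ℝ≥0} (hA : A ⊆ Ioi r)
    (h : sInf ((↑) '' A : Set ℝ≥0∞) ≤ r) : ∃ᶠ s in 𝓝[>] r, s ∈ A := by
  rw [(nhdsGT_basis r).frequently_iff]
  intro w hw
  obtain ⟨_, ⟨s, hsA, rfl⟩, hsw⟩ := sInf_lt_iff.mp (h.trans_lt (ENNReal.coe_lt_coe.mpr hw))
  exact ⟨s, ⟨hA hsA, ENNReal.coe_lt_coe.mp hsw⟩, hsA⟩

theorem ContinuousWithinAt.eq_of_sInf_coe_le {V : Type*} [TopologicalSpace V] [T1Space V]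
    {a : V} {h : ℝ≥0 → V} {r : ℝ≥0} {A : Set ℝ≥0} (hc : ContinuousWithinAt h (Ici r) r)
    (hA : ∀ s ∈ A, r < s ∧ h s = a) (hinf : sInf ((↑) '' A : Set ℝ≥0∞) ≤ r) : h r = a :=
  isClosed_singleton.mem_of_frequently_of_tendsto
    ((frequently_nhdsGT_of_sInf_coe_le (fun s hs => (hA s hs).1) hinf).mono
      fun s hs => (hA s hs).2)
    (hc.mono_left (nhdsWithin_mono r Ioi_subset_Ici_self))

section Excursion

variable {V : Type*} [PseudoMetricSpace V] {a : V} {f : ℝ≥0 → V} {t u : ℝ≥0}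

theorem gLeft_le (t : ℝ≥0) : gLeft a f t ≤ t :=
  csSup_le' fun _ hs => hs.1

theorem le_gLeft {z : ℝ≥0} (hzt : z ≤ t) (hz : f z = a) : z ≤ gLeft a f t :=
  le_csSup ⟨t, fun _ hs => hs.1⟩ ⟨hzt, hz⟩

theorem dRight_le {z : ℝ≥0} (htz : t < z) (hz : f z = a) : dRight a f t ≤ z :=
  sInf_le ⟨z, ⟨htz, hz⟩, rfl⟩

theorem lt_dRight [T1Space V] (hf : Cadlag f) (ht : f t ≠ a) : (t : ℝ≥0∞) < dRight a f t :=
  not_le.mp fun h => ht ((hf.1 t).eq_of_sInf_coe_le (fun _ hs => hs) h)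

theorem apply_ne_of_gLeft_lt_of_lt_dRight (hu₁ : gLeft a f t < u)
    (hu₂ : (u : ℝ≥0∞) < dRight a f t) : f u ≠ a := by
  intro hu
  rcases le_or_gt u t with hut | htu
  · exact hu₁.not_ge (le_gLeft hut hu)
  · exact hu₂.not_ge (dRight_le htu hu)

theorem gLeft_eq_of_mem (hu₁ : gLeft a f t ≤ u) (hu₂ : (u : ℝ≥0∞) < dRight a f t) :
    gLeft a f u = gLeft a f t := by
  have hzeros : {z | z ≤ u ∧ f z = a} = {z | z ≤ t ∧ f z = a} := by
    ext z
    refine ⟨fun ⟨hzu, hz⟩ => ⟨not_lt.mp fun htz => ?_, hz⟩, fun ⟨hzt, hz⟩ => ⟨?_, hz⟩⟩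
    · exact hu₂.not_ge ((dRight_le htz hz).trans (ENNReal.coe_le_coe.mpr hzu))
    · exact (le_gLeft hzt hz).trans hu₁
  simp only [gLeft, hzeros]

theorem dRight_eq_of_gLeft_eq_of_le {t' : ℝ≥0} (htt' : t ≤ t')
    (hg : gLeft a f t = gLeft a f t') : dRight a f t = dRight a f t' := by
  have hzeros : {z | t < z ∧ f z = a} = {z | t' < z ∧ f z = a} := by
    ext z
    refine ⟨fun ⟨htz, hz⟩ => ⟨not_le.mp fun hzt' => ?_, hz⟩,
      fun ⟨htz, hz⟩ => ⟨htt'.trans_lt htz, hz⟩⟩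
    exact htz.not_ge ((le_gLeft hzt' hz).trans (hg ▸ gLeft_le t))
  simp only [dRight, hzeros]

theorem excAt_eq_of_gLeft_eq {t' : ℝ≥0} (hg : gLeft a f t = gLeft a f t') :
    excAt a f t = excAt a f t' := by
  have hd : dRight a f t = dRight a f t' := by
    rcases le_total t t' with h | h
    · exact dRight_eq_of_gLeft_eq_of_le h hg
    · exact (dRight_eq_of_gLeft_eq_of_le h hg.symm).symm
  funext s
  simp only [excAt, hg, hd]

theorem excAt_of_lt {s : ℝ≥0} (hs : ((gLeft a f t + s : ℝ≥0) : ℝ≥0∞) < dRight a f t) :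
    excAt a f t s = f (gLeft a f t + s) :=
  if_pos hs

theorem excAt_of_le {s : ℝ≥0} (hs : dRight a f t ≤ ((gLeft a f t + s : ℝ≥0) : ℝ≥0∞)) :
    excAt a f t s = a :=
  if_neg hs.not_gt

theorem excAt_tsub_gLeft [T1Space V] (hf : Cadlag f) (ht : f t ≠ a) :
    excAt a f t (t - gLeft a f t) = f t := by
  have hgt : gLeft a f t + (t - gLeft a f t) = t := add_tsub_cancel_of_le (gLeft_le t)
  rw [excAt_of_lt (by rw [hgt]; exact lt_dRight hf ht), hgt]

theorem edist_le_iSup_excAt [T1Space V] (hf : Cadlag f) (ht : f t ≠ a) :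
    edist (f t) a ≤ ⨆ s, edist (excAt a f t s) a :=
  excAt_tsub_gLeft hf ht ▸ le_iSup (fun s => edist (excAt a f t s) a) (t - gLeft a f t)

theorem exists_zero_of_gLeft_lt {t' : ℝ≥0} (h : gLeft a f t < gLeft a f t') :
    ∃ z ∈ Ioc t (gLeft a f t'), f z = a := by
  obtain ⟨z, ⟨hzt', hz⟩, hgz⟩ := exists_lt_of_lt_csSup' h
  exact ⟨z, ⟨not_le.mp fun hzt => hgz.not_ge (le_gLeft hzt hz), le_gLeft hzt' hz⟩, hz⟩

theorem exists_le_edist_of_lt_iSup_excAt {δ : ℝ≥0∞}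
    (h : δ < ⨆ s, edist (excAt a f t s) a) :
    ∃ u, gLeft a f t ≤ u ∧ gLeft a f u = gLeft a f t ∧ δ < edist (f u) a := by
  obtain ⟨s, hs⟩ := lt_iSup_iff.mp h
  have hsd : ((gLeft a f t + s : ℝ≥0) : ℝ≥0∞) < dRight a f t :=
    not_le.mp fun hle => by simp [excAt_of_le hle] at hs
  exact ⟨_, le_self_add, gLeft_eq_of_mem le_self_add hsd, excAt_of_lt hsd ▸ hs⟩

theorem cadlag_excAt (hf : Cadlag f) (t : ℝ≥0) : Cadlag (excAt a f t) :=
  (hf.comp_add_left (gLeft a f t)).ite_mem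
    (I := {s | ((gLeft a f t + s : ℝ≥0) : ℝ≥0∞) < dRight a f t})
    (isOpen_lt (ENNReal.continuous_coe.comp (continuous_const_add _)) continuous_const)
    fun _ _ hs hs' => (ENNReal.coe_le_coe.mpr (add_le_add_right hs _)).trans_lt hs'

theorem isExcursion_excAt [T1Space V] (hf : Cadlag f) (t : ℝ≥0) :
    IsExcursion a (excAt a f t) := by
  refine ⟨cadlag_excAt hf t, fun r hr => not_not.mp fun hra => hra ?_⟩
  have hrd : ((gLeft a f t + r : ℝ≥0) : ℝ≥0∞) < dRight a f t :=
    not_le.mp fun hle => hra (excAt_of_le hle)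
  refine ((cadlag_excAt hf t).1 r).eq_of_sInf_coe_le
    (fun s hs => ⟨not_le.mp fun hsr => ?_, hs.2⟩) hr
  have hsd : ((gLeft a f t + s : ℝ≥0) : ℝ≥0∞) < dRight a f t :=
    (ENNReal.coe_le_coe.mpr (add_le_add_right hsr _)).trans_lt hrd
  exact apply_ne_of_gLeft_lt_of_lt_dRight (lt_add_of_pos_right _ hs.1) hsd
    (excAt_of_lt hsd ▸ hs.2)

end Excursion

def highExcursionStarts {V : Type*} [PseudoMetricSpace V] (a : V) (f : ℝ≥0 → V) (m : ℝ≥0)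
    (δ : ℝ≥0∞) : Set ℝ≥0 :=
  {g | g ≤ m ∧ ∃ t, f t ≠ a ∧ gLeft a f t = g ∧ δ ≤ ⨆ s, edist (excAt a f t s) a}

section Truncation

variable {V : Type*} [PseudoMetricSpace V] {a : V} {f : ℝ≥0 → V}

theorem finite_highExcursionStarts (hf : Cadlag f) (m : ℝ≥0) {δ : ℝ≥0∞} (hδ : 0 < δ) :
    (highExcursionStarts a f m δ).Finite := by
  set S := highExcursionStarts a f m δ
  by_contra hS
  change S.Infinite at hS
  obtain ⟨δ', hδ'₀, hδ'δ⟩ := exists_between hδ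
  have hhigh : ∀ g ∈ S, ∃ u, g ≤ u ∧ gLeft a f u = g ∧ δ' < edist (f u) a := by
    rintro g ⟨-, t, -, rfl, ht⟩
    exact exists_le_edist_of_lt_iSup_excAt (hδ'δ.trans_le ht)
  choose! u hgu hu hfar using hhigh
  have hsep : ∀ g ∈ S, ∀ g' ∈ S, g < g' → ∃ z ∈ Ioc (u g) g', f z = a := by
    intro g hg g' hg' hgg'
    rw [← hu g' hg']
    exact exists_zero_of_gLeft_lt (by rwa [hu g hg, hu g' hg'])
  have hmono : StrictMonoOn u S := fun g hg g' hg' hgg' =>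
    let ⟨_, hz, _⟩ := hsep g hg g' hg' hgg'
    hz.1.trans_le (hz.2.trans (hgu g' hg'))
  -- the excursion starting last may reach beyond `m`, so it is left out
  have hinf : (u '' (S \ {sSup S})).Infinite :=
    (hS.sdiff (finite_singleton _)).image (hmono.injOn.mono sdiff_subset)
  refine hinf (hf.finite_of_forall_exists_zero_between (a := a) (m := m) hδ'₀ ?_ ?_ ?_)
  · rintro _ ⟨g, ⟨hg, hne⟩, rfl⟩
    obtain ⟨g', hg', hgg'⟩ := exists_lt_of_lt_csSup ⟨g, hg⟩
      ((le_csSup ⟨m, fun _ h => h.1⟩ hg).lt_of_ne hne)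
    obtain ⟨z, hz, -⟩ := hsep g hg g' hg' hgg'
    exact hz.1.le.trans (hz.2.trans hg'.1)
  · rintro _ ⟨g, hg, rfl⟩
    exact (hfar g hg.1).le
  · rintro _ ⟨g, hg, rfl⟩ _ ⟨g', hg', rfl⟩ hlt
    obtain ⟨z, hz, hza⟩ := hsep g hg.1 g' hg'.1 ((hmono.lt_iff_lt hg.1 hg'.1).mp hlt)
    exact ⟨z, ⟨hz.1.le, hz.2.trans (hgu g' hg'.1)⟩, hza⟩

theorem tendsto_iSup_edist_phiTrunc [T1Space V] (hf : Cadlag f) {φ : (ℝ≥0 → V) → ℝ≥0∞}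
    (hφ : ∀ e, IsExcursion a e → (0 < φ e ↔ e ≠ fun _ => a)) (m : ℝ≥0) :
    Tendsto (fun ε : ℝ≥0 => ⨆ t : Icc (0 : ℝ≥0) m, edist (PhiTrunc a φ ε f t) (f t))
      (𝓝[>] 0) (𝓝 0) := by
  rw [ENNReal.tendsto_nhds_zero]
  intro η hη
  have hkept : ∀ᶠ ε : ℝ≥0 in 𝓝[>] 0, ∀ g ∈ highExcursionStarts a f m η,
      ∀ t, gLeft a f t = g → (ε : ℝ≥0∞) < φ (excAt a f t) := by
    refine (finite_highExcursionStarts hf m hη).eventually_all.mpr ?_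
    rintro _ ⟨-, t₀, -, rfl, hhigh⟩
    have hpos : 0 < φ (excAt a f t₀) := (hφ _ (isExcursion_excAt hf t₀)).mpr fun h =>
      hη.not_ge (by simpa [h] using hhigh)
    have hcoe : Tendsto (fun ε : ℝ≥0 => (ε : ℝ≥0∞)) (𝓝[>] 0) (𝓝 0) :=
      ENNReal.tendsto_coe.mpr (tendsto_id.mono_left nhdsWithin_le_nhds)
    filter_upwards [hcoe.eventually_lt_const hpos] with ε hε t ht
    rwa [excAt_eq_of_gLeft_eq ht]
  filter_upwards [hkept] with ε hε
  refine iSup_le fun ⟨t, _, htm⟩ => ?_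
  unfold PhiTrunc
  split_ifs with hφt
  · simp
  by_cases hta : f t = a
  · simp [hta]
  have hlow : ⨆ s, edist (excAt a f t s) a < η := not_le.mp fun hhigh =>
    hφt (hε _ ⟨(gLeft_le t).trans htm, t, hta, rfl, hhigh⟩ t rfl)
  rw [edist_comm]
  exact (edist_le_iSup_excAt hf hta).trans hlow.le

end Truncation

theorem J1Tendsto.of_tendsto_iSup_edist {V ι : Type*} [PseudoMetricSpace V] {F : Filter ι}
    {f : ι → ℝ≥0 → V} {g : ℝ≥0 → V}
    (h : ∀ m : ℝ≥0, Tendsto (fun i => ⨆ s : Icc (0 : ℝ≥0) m, edist (f i s) (g s)) F (𝓝 0)) :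
    J1Tendsto F f g :=
  ⟨fun _ => id, fun _ => ⟨strictMono_id, Function.bijective_id⟩, by simp [tendsto_const_nhds],
    univ, fun r => ⟨r, mem_univ r, le_rfl⟩, fun m _ => h m⟩

/-- finitely many `δ`-high excursions start before `m`;
consequently `Φ_ε(f) → f` uniformly on compacts, hence in J1, as `ε → 0`. -/
theorem statement3 {V : Type*} [MetricSpace V] (a : V) (f : ℝ≥0 → V) (hf : Cadlag f)
    (φ : (ℝ≥0 → V) → ℝ≥0∞)
    (hφ : ∀ e : ℝ≥0 → V, IsExcursion a e → (0 < φ e ↔ e ≠ fun _ => a)) :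
    (∀ m : ℝ≥0, ∀ δ : ℝ≥0∞, 0 < δ →
      {g : ℝ≥0 | g ≤ m ∧ ∃ t : ℝ≥0, f t ≠ a ∧ gLeft a f t = g ∧
        δ ≤ ⨆ s : ℝ≥0, edist (excAt a f t s) a}.Finite) ∧
    (∀ m : ℝ≥0, Filter.Tendsto
      (fun ε : ℝ≥0 => ⨆ t : Set.Icc (0:ℝ≥0) m, edist (PhiTrunc a φ ε f t) (f t))
      (nhdsWithin 0 (Set.Ioi 0)) (nhds 0)) ∧
    J1Tendsto (nhdsWithin (0:ℝ≥0) (Set.Ioi 0)) (fun ε => PhiTrunc a φ ε f) f :=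
  ⟨fun m _ hδ => finite_highExcursionStarts hf m hδ, tendsto_iSup_edist_phiTrunc hf hφ,
    J1Tendsto.of_tendsto_iSup_edist (tendsto_iSup_edist_phiTrunc hf hφ)⟩
end

section
/- Let f : [0,∞) → ℝ^d be càdlàg, ε > 0, and define T^↑(f,ε) = inf{t ≥ 0 : |f(t)| > ε} (with |x| = max of coordinate absolute values). If f_n → f in the J1 topology then limsup_n T^↑(f_n, ε) ≤ T^↑(f, ε). If moreover T^↑(f, ε) = T̃^↑(f, ε) where T̃^↑(f,ε) = inf{t ≥ 0 : |f(t)| ≥ ε or |f(t−)| ≥ ε}, then T^↑(f_n, ε) → T^↑(f, ε). -/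
open scoped NNReal ENNReal Topology
open Filter Set

noncomputable section

/-- `T^↑(f,ε) = inf{t ≥ 0 : |f(t)| > ε}`, where `‖·‖` is the sup norm on `ℝ^d`. -/
def Tup {d : ℕ} (f : ℝ≥0 → (Fin d → ℝ)) (ε : ℝ) : ℝ≥0∞ :=
  sInf ((fun t : ℝ≥0 => (t : ℝ≥0∞)) '' {t : ℝ≥0 | ε < ‖f t‖})

/-- `T̃^↑(f,ε) = inf{t ≥ 0 : |f(t)| ≥ ε or |f(t−)| ≥ ε}`. -/
def TupTilde {d : ℕ} (f : ℝ≥0 → (Fin d → ℝ)) (ε : ℝ) : ℝ≥0∞ :=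
  sInf ((fun t : ℝ≥0 => (t : ℝ≥0∞)) ''
    {t : ℝ≥0 | ε ≤ ‖f t‖ ∨ ε ≤ ‖Function.leftLim f t‖})

end

/-! Upper bound: if `‖F t‖ > ε`, the time changes of J1 convergence provide times `s` close to
`t` with `f n s` close to `F t`, so `‖f n s‖ > ε`. Lower bound: below `T̃^↑(F, ε)` both `‖F‖` and
`‖F(·−)‖` stay below `ε`; on a compact interval this improves, `F` being càdlàg, to a uniform bound
`‖F‖ ≤ a < ε`, which uniform convergence of `f n ∘ τ n` (`τ n` the time changes) transfers to
`f n`. When `T^↑(F, ε) = T̃^↑(F, ε)` the two bounds meet. -/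

open Function

theorem IsCompact.exists_lt_forall_le_of_eventually_le {X α : Type*} [TopologicalSpace X]
    [LinearOrder α] [NoMinOrder α] {K : Set X} (hK : IsCompact K) {g : X → α} {b : α}
    (h : ∀ x ∈ K, ∃ a < b, ∀ᶠ y in 𝓝 x, g y ≤ a) : ∃ a < b, ∀ y ∈ K, g y ≤ a := by
  refine hK.induction_on (p := fun s => ∃ a < b, ∀ y ∈ s, g y ≤ a) ?_ ?_ ?_ ?_
  · obtain ⟨a, ha⟩ := exists_lt b
    exact ⟨a, ha, fun _ => False.elim⟩
  · rintro s t hst ⟨a, hab, ha⟩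
    exact ⟨a, hab, fun y hy => ha y (hst hy)⟩
  · rintro s t ⟨a, hab, ha⟩ ⟨a', hab', ha'⟩
    refine ⟨max a a', max_lt hab hab', ?_⟩
    rintro y (hy | hy)
    · exact (ha y hy).trans (le_max_left _ _)
    · exact (ha' y hy).trans (le_max_right _ _)
  · intro x hx
    obtain ⟨a, hab, ha⟩ := h x hx
    exact ⟨_, mem_nhdsWithin_of_mem_nhds ha, a, hab, fun y hy => hy⟩

theorem Cadlag.exists_lt_eventually_norm_le {E : Type*} [NormedAddCommGroup E]
    {F : ℝ≥0 → E} (hF : Cadlag F) {ε : ℝ} {t : ℝ≥0} (ht : ‖F t‖ < ε)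
    (ht' : ‖leftLim F t‖ < ε) : ∃ a < ε, ∀ᶠ s in 𝓝 t, ‖F s‖ ≤ a := by
  obtain ⟨a, ha, haε⟩ := exists_between (max_lt ht ht')
  refine ⟨a, haε, ?_⟩
  rw [← nhdsLT_sup_nhdsGE, eventually_sup]
  refine ⟨?_, ((hF.1 t).norm.eventually_lt_const (le_max_left _ _ |>.trans_lt ha)).mono
    fun _ => le_of_lt⟩
  rcases eq_zero_or_pos t with rfl | ht0
  · simp
  · obtain ⟨L, hL⟩ := hF.2 t ht0
    have : (𝓝[<] t).NeBot := nhdsLT_neBot_of_exists_lt ⟨0, ht0⟩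
    rw [leftLim_eq_of_tendsto hL] at ha
    exact (hL.norm.eventually_lt_const (le_max_right _ _ |>.trans_lt ha)).mono fun _ => le_of_lt

theorem Cadlag.exists_lt_forall_norm_le {E : Type*} [NormedAddCommGroup E]
    {F : ℝ≥0 → E} (hF : Cadlag F) {ε : ℝ} {c : ℝ≥0}
    (h : ∀ t ≤ c, ‖F t‖ < ε ∧ ‖leftLim F t‖ < ε) : ∃ a < ε, ∀ t ≤ c, ‖F t‖ ≤ a := by
  have hc : IsCompact (Iic c) := by
    simpa [← Ici_inter_Iic] using isCompact_Icc (a := (0 : ℝ≥0)) (b := c)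
  exact hc.exists_lt_forall_le_of_eventually_le fun t ht =>
    hF.exists_lt_eventually_norm_le (h t ht).1 (h t ht).2

theorem NNReal.lt_of_dist_lt_sub {a b c d : ℝ≥0} (h : dist a b < c - d) (hbd : b ≤ d) :
    a < c := by
  rw [NNReal.dist_eq, abs_sub_lt_iff] at h
  have : (b : ℝ) ≤ d := hbd
  exact_mod_cast (show (a : ℝ) < c by linarith)

namespace J1Tendsto

variable {V ι : Type*} [PseudoMetricSpace V] {L : Filter ι} {f : ι → ℝ≥0 → V} {g : ℝ≥0 → V}

theorem exists_tendstoUniformly (h : J1Tendsto L f g) :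
    ∃ τ : ι → ℝ≥0 → ℝ≥0, (∀ i, Surjective (τ i)) ∧ TendstoUniformly τ id L ∧
      ∀ r, TendstoUniformlyOn (fun i s => f i (τ i s)) g L (Iic r) := by
  obtain ⟨τ, hτ, hτid, M, hM, hMconv⟩ := h
  refine ⟨τ, fun i => (hτ i).2.2, ?_, fun r => ?_⟩
  · rw [EMetric.tendstoUniformly_iff]
    intro η hη
    filter_upwards [hτid.eventually_lt_const hη] with i hi s
    rw [edist_comm]
    exact (le_iSup (fun s => edist (τ i s) s) s).trans_lt hi
  · obtain ⟨m, hm, hrm⟩ := hM r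
    rw [EMetric.tendstoUniformlyOn_iff]
    intro δ hδ
    filter_upwards [(hMconv m hm).eventually_lt_const hδ] with i hi s hs
    rw [edist_comm]
    exact (le_iSup (fun s : Icc (0 : ℝ≥0) m => edist (f i (τ i s)) (g s))
      ⟨s, zero_le, le_trans hs hrm⟩).trans_lt hi

theorem eventually_exists_dist_lt (h : J1Tendsto L f g) {t t' : ℝ≥0} (htt' : t < t')
    {δ : ℝ} (hδ : 0 < δ) : ∀ᶠ i in L, ∃ s < t', dist (f i s) (g t) < δ := by
  obtain ⟨τ, -, hτ, hfτ⟩ := h.exists_tendstoUniformly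
  filter_upwards [Metric.tendstoUniformly_iff.1 hτ _ (sub_pos.2 htt'),
    Metric.tendstoUniformlyOn_iff.1 (hfτ t) δ hδ] with i hi hfi
  refine ⟨τ i t, NNReal.lt_of_dist_lt_sub (dist_comm (τ i t) t ▸ hi t) le_rfl, ?_⟩
  rw [dist_comm]
  exact hfi t self_mem_Iic

theorem eventually_forall_exists_dist_lt (h : J1Tendsto L f g) {r r' : ℝ≥0} (hrr' : r < r')
    {δ : ℝ} (hδ : 0 < δ) : ∀ᶠ i in L, ∀ s ≤ r, ∃ u < r', dist (f i s) (g u) < δ := by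
  obtain ⟨τ, hτs, hτ, hfτ⟩ := h.exists_tendstoUniformly
  filter_upwards [Metric.tendstoUniformly_iff.1 hτ _ (sub_pos.2 hrr'),
    Metric.tendstoUniformlyOn_iff.1 (hfτ r') δ hδ] with i hi hfi s hs
  obtain ⟨u, rfl⟩ := hτs i s
  have hu : u < r' := NNReal.lt_of_dist_lt_sub (hi u) hs
  exact ⟨u, hu, dist_comm (g u) _ ▸ hfi u hu.le⟩

end J1Tendsto

section HittingTimes

variable {d : ℕ} {f : ℝ≥0 → (Fin d → ℝ)} {ε : ℝ}

theorem Tup_le_of_lt_norm {t : ℝ≥0} (ht : ε < ‖f t‖) : Tup f ε ≤ t :=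
  sInf_le ⟨t, ht, rfl⟩

theorem le_Tup_of_forall_norm_le {c : ℝ≥0} (h : ∀ t ≤ c, ‖f t‖ ≤ ε) : c ≤ Tup f ε := by
  refine le_sInf ?_
  rintro _ ⟨t, ht, rfl⟩
  by_contra! htc
  exact (h t (by exact_mod_cast htc.le)).not_gt ht

theorem norm_lt_of_lt_TupTilde {t : ℝ≥0} (ht : t < TupTilde f ε) :
    ‖f t‖ < ε ∧ ‖leftLim f t‖ < ε := by
  by_contra! h
  have : TupTilde f ε ≤ t := sInf_le ⟨t, (le_or_gt ε ‖f t‖).imp_right h, rfl⟩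
  exact this.not_gt ht

end HittingTimes

namespace J1Tendsto

variable {ι : Type*} {L : Filter ι} {d : ℕ} {f : ι → ℝ≥0 → (Fin d → ℝ)} {g : ℝ≥0 → (Fin d → ℝ)}
  {ε : ℝ} {y : ℝ≥0∞}

theorem eventually_Tup_lt (h : J1Tendsto L f g) (hy : Tup g ε < y) :
    ∀ᶠ i in L, Tup (f i) ε < y := by
  obtain ⟨_, ⟨t, ht, rfl⟩, hty⟩ := sInf_lt_iff.1 hy
  obtain ⟨t', htt', ht'y⟩ := ENNReal.lt_iff_exists_nnreal_btwn.1 hty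
  filter_upwards [h.eventually_exists_dist_lt (ENNReal.coe_lt_coe.1 htt') (sub_pos.2 ht)]
    with i ⟨s, hst', hs⟩
  have hεs : ε < ‖f i s‖ := by
    have := norm_sub_norm_le (g t) (f i s)
    rw [← dist_eq_norm, dist_comm] at this
    linarith
  calc Tup (f i) ε ≤ s := Tup_le_of_lt_norm hεs
    _ < t' := ENNReal.coe_lt_coe.2 hst'
    _ < y := ht'y

theorem eventually_lt_Tup (hg : Cadlag g) (h : J1Tendsto L f g) (hy : y < TupTilde g ε) :
    ∀ᶠ i in L, y < Tup (f i) ε := by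
  obtain ⟨c, hyc, hc⟩ := ENNReal.lt_iff_exists_nnreal_btwn.1 hy
  obtain ⟨c', hcc', hc'⟩ := ENNReal.lt_iff_exists_nnreal_btwn.1 hc
  obtain ⟨a, haε, ha⟩ := hg.exists_lt_forall_norm_le fun t ht =>
    norm_lt_of_lt_TupTilde ((ENNReal.coe_le_coe.2 ht).trans_lt hc')
  filter_upwards [h.eventually_forall_exists_dist_lt (ENNReal.coe_lt_coe.1 hcc') (sub_pos.2 haε)]
    with i hi
  refine hyc.trans_le (le_Tup_of_forall_norm_le fun s hs => ?_)
  obtain ⟨u, huc', hu⟩ := hi s hs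
  linarith [norm_le_norm_add_const_of_dist_le hu.le, ha u huc'.le]

end J1Tendsto

theorem statement8_general {d : ℕ} (f : ℕ → ℝ≥0 → (Fin d → ℝ)) (F : ℝ≥0 → (Fin d → ℝ))
    (hFc : Cadlag F) (ε : ℝ)
    (hconv : J1Tendsto Filter.atTop f F) :
    Filter.limsup (fun n => Tup (f n) ε) Filter.atTop ≤ Tup F ε ∧
    (Tup F ε = TupTilde F ε →
      Filter.Tendsto (fun n => Tup (f n) ε) Filter.atTop (nhds (Tup F ε))) := by
  refine ⟨(limsup_le_iff).2 fun y hy => hconv.eventually_Tup_lt hy, fun hTT => ?_⟩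
  exact tendsto_order.2 ⟨fun y hy => hconv.eventually_lt_Tup hFc (hTT ▸ hy),
    fun y hy => hconv.eventually_Tup_lt hy⟩

/-- `limsup T^↑(f_n,ε) ≤ T^↑(f,ε)` under J1 convergence, with
equality of limits when `T^↑(f,ε) = T̃^↑(f,ε)`. -/
theorem statement8 {d : ℕ} (f : ℕ → ℝ≥0 → (Fin d → ℝ)) (F : ℝ≥0 → (Fin d → ℝ))
    (hfc : ∀ n, Cadlag (f n)) (hFc : Cadlag F) (ε : ℝ) (hε : 0 < ε)
    (hconv : J1Tendsto Filter.atTop f F) :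
    Filter.limsup (fun n => Tup (f n) ε) Filter.atTop ≤ Tup F ε ∧
    (Tup F ε = TupTilde F ε →
      Filter.Tendsto (fun n => Tup (f n) ε) Filter.atTop (nhds (Tup F ε))) :=
  statement8_general f F hFc ε hconv
end

section
/- Under assumptions (H1): c_n N_n(φ > ε) → N(φ > ε) for all non-atoms ε, (H2): c_n N_n((1 − e^{−λT}); φ ≤ ε) → N((1 − e^{−λT}); φ ≤ ε) for all λ > 0 and non-atoms ε, and N(φ = +∞) = 0, the convergence (H3) holds: c_n N_n(1 − e^{−λT}) → N(1 − e^{−λT}) for every λ > 0. -/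
open scoped NNReal ENNReal Topology
open Filter MeasureTheory

noncomputable section

/-- `1 − e^{−λ x}` for `x ∈ [0,∞]`, as an `ℝ≥0∞`-valued function (equal to `1`
at `x = ∞`). -/
def oneMinusExpNeg (lam : ℝ) (x : ℝ≥0∞) : ℝ≥0∞ :=
  if x = ⊤ then 1 else ENNReal.ofReal (1 - Real.exp (-(lam * x.toReal)))

end

/-!
Since `1 − e^{−λT} ≤ 1`, splitting the integral along `{φ ≤ ε}` gives
`c_n N_n(1 − e^{−λT}; φ ≤ ε) ≤ c_n N_n(1 − e^{−λT}) ≤ c_n N_n(1 − e^{−λT}; φ ≤ ε) + c_n N_n(φ > ε)`.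
For a non-atom `ε` of `φ` under `N`, (H1) and (H2) squeeze the liminf and limsup of the middle
term between `N(1 − e^{−λT}) − N(φ > ε)` and `N(1 − e^{−λT}) + N(φ > ε)`. Since `N` is finite
on `{φ > a}`, only countably many levels above `a` are atoms, so non-atoms can be taken
arbitrarily large, and `N(φ > ε) → N(φ = ∞) = 0` as `ε → ∞`.
-/

lemma oneMinusExpNeg_le_one (lam : ℝ) (x : ℝ≥0∞) : oneMinusExpNeg lam x ≤ 1 := by
  unfold oneMinusExpNeg
  split
  · exact le_rfl
  · rw [ENNReal.ofReal_le_one]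
    linarith [Real.exp_pos (-(lam * x.toReal))]

theorem ENNReal.tendsto_of_le_liminf_add_of_limsup_le_add {α ι : Type*} {l : Filter α}
    {l' : Filter ι} [l'.NeBot] {u : α → ℝ≥0∞} {a : ℝ≥0∞} {δ : ι → ℝ≥0∞}
    (hδ : Tendsto δ l' (𝓝 0)) (hle : ∀ k, a ≤ liminf u l + δ k)
    (hge : ∀ k, limsup u l ≤ a + δ k) : Tendsto u l (𝓝 a) := by
  have hadd : ∀ b : ℝ≥0∞, Tendsto (fun k => b + δ k) l' (𝓝 b) := fun b => by
    simpa using tendsto_const_nhds.add hδ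
  exact tendsto_of_le_liminf_of_limsup_le (ge_of_tendsto (hadd _) (.of_forall hle))
    (ge_of_tendsto (hadd _) (.of_forall hge))

section SplitIntegral

variable {α : Type*} [MeasurableSpace α] {μ : Measure α} {f : α → ℝ≥0∞} {s : Set α}

lemma setLIntegral_le_measure_of_le_one (hf : ∀ x, f x ≤ 1) (s : Set α) :
    ∫⁻ x in s, f x ∂μ ≤ μ s :=
  (lintegral_mono hf).trans_eq (setLIntegral_one s)

lemma lintegral_le_setLIntegral_add_measure_compl (hf : ∀ x, f x ≤ 1) (hs : MeasurableSet s) :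
    ∫⁻ x, f x ∂μ ≤ ∫⁻ x in s, f x ∂μ + μ sᶜ := by
  rw [← lintegral_add_compl f hs]
  gcongr
  exact setLIntegral_le_measure_of_le_one hf sᶜ

variable {ι : Type*} {l : Filter ι} [l.NeBot] {μs : ι → Measure α} {c : ι → ℝ≥0∞}

lemma lintegral_le_liminf_add_of_tendsto_setLIntegral (hf : ∀ x, f x ≤ 1)
    (hs : MeasurableSet s)
    (hin : Tendsto (fun i => c i * ∫⁻ x in s, f x ∂μs i) l (𝓝 (∫⁻ x in s, f x ∂μ))) :
    ∫⁻ x, f x ∂μ ≤ liminf (fun i => c i * ∫⁻ x, f x ∂μs i) l + μ sᶜ := by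
  refine (lintegral_le_setLIntegral_add_measure_compl hf hs).trans ?_
  gcongr
  rw [← hin.liminf_eq]
  exact liminf_le_liminf (.of_forall fun i => by gcongr; exact Measure.restrict_le_self)

lemma limsup_le_lintegral_add_of_tendsto_setLIntegral (hf : ∀ x, f x ≤ 1)
    (hs : MeasurableSet s)
    (hin : Tendsto (fun i => c i * ∫⁻ x in s, f x ∂μs i) l (𝓝 (∫⁻ x in s, f x ∂μ)))
    (hout : Tendsto (fun i => c i * μs i sᶜ) l (𝓝 (μ sᶜ))) :
    limsup (fun i => c i * ∫⁻ x, f x ∂μs i) l ≤ ∫⁻ x, f x ∂μ + μ sᶜ := by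
  have hsplit : ∀ i, c i * ∫⁻ x, f x ∂μs i ≤
      c i * ∫⁻ x in s, f x ∂μs i + c i * μs i sᶜ := fun i => by
    rw [← mul_add]
    gcongr
    exact lintegral_le_setLIntegral_add_measure_compl hf hs
  calc limsup (fun i => c i * ∫⁻ x, f x ∂μs i) l
      ≤ ∫⁻ x in s, f x ∂μ + μ sᶜ := by
        rw [← (hin.add hout).limsup_eq]
        exact limsup_le_limsup (.of_forall hsplit)
    _ ≤ ∫⁻ x, f x ∂μ + μ sᶜ := by gcongr; exact Measure.restrict_le_self

end SplitIntegral

section LevelSets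

variable {α : Type*} [MeasurableSpace α] {μ : Measure α} {φ : α → ℝ≥0∞}

lemma exists_gt_measure_level_set_eq_zero (hφ : Measurable φ) {a : ℝ≥0∞} (ha : a ≠ ⊤)
    (hfin : μ {x | a < φ x} ≠ ⊤) : ∃ ε, a < ε ∧ ε ≠ ⊤ ∧ μ {x | φ x = ε} = 0 := by
  set ν := μ.restrict {x | a < φ x}
  have : IsFiniteMeasure ν := ⟨by rwa [Measure.restrict_apply_univ, lt_top_iff_ne_top]⟩
  have hg : Measurable fun x => (φ x).toReal := ENNReal.measurable_toReal.comp hφ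
  -- the finite measure `ν` charges only countably many levels, whose complement is dense in `ℝ`
  obtain ⟨t, ht_null, ht_gt, -⟩ := ((Measure.countable_meas_level_set_pos (μ := ν) hg).dense_compl
    ℝ).exists_between (lt_add_one a.toReal)
  have hat : a < ENNReal.ofReal t := (ENNReal.lt_ofReal_iff_toReal_lt ha).2 ht_gt
  refine ⟨ENNReal.ofReal t, hat, ENNReal.ofReal_ne_top,
    measure_mono_null (t := {x | (φ x).toReal = t} ∩ {x | a < φ x}) ?_ ?_⟩
  · intro x (hx : φ x = ENNReal.ofReal t)
    refine ⟨?_, ?_⟩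
    · simp [hx, ENNReal.toReal_ofReal ((ENNReal.toReal_nonneg).trans ht_gt.le)]
    · simpa [hx] using hat
  · have h0 : ν {x | (φ x).toReal = t} = 0 := by simpa using ht_null
    exact (Measure.restrict_apply (t := {x | (φ x).toReal = t})
      (hg (measurableSet_singleton t))).symm.trans h0

lemma tendsto_measure_natCast_lt (hφ : Measurable φ)
    (hfin : ∃ k : ℕ, μ {x | (k : ℝ≥0∞) < φ x} ≠ ⊤) :
    Tendsto (fun k : ℕ => μ {x | (k : ℝ≥0∞) < φ x}) atTop (𝓝 (μ {x | φ x = ⊤})) := by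
  have hanti : Antitone fun k : ℕ => {x | (k : ℝ≥0∞) < φ x} :=
    fun k m hkm x (hx : (m : ℝ≥0∞) < φ x) => show (k : ℝ≥0∞) < φ x from lt_of_le_of_lt (Nat.cast_le.2 hkm) hx
  have hinter : (⋂ k : ℕ, {x | (k : ℝ≥0∞) < φ x}) = {x | φ x = ⊤} := by
    ext x
    simp only [Set.mem_iInter, Set.mem_ofPred_eq]
    refine ⟨fun h => ?_, fun h k => h ▸ ENNReal.natCast_lt_top k⟩
    by_contra hne
    obtain ⟨k, hk⟩ := ENNReal.exists_nat_gt hne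
    exact (h k).not_gt hk
  rw [← hinter]
  exact tendsto_measure_iInter_atTop
    (fun k => (hφ measurableSet_Ioi).nullMeasurableSet) hanti hfin

end LevelSets

theorem statement15_general {E : Type*} [MeasurableSpace E]
    (Nn : ℕ → Measure E)
    (N : Measure E) (φ : E → ℝ≥0∞) (hφ : Measurable φ)
    (T : E → ℝ≥0∞)
    (c : ℕ → ℝ≥0)
    (hfin : ∀ ε : ℝ≥0∞, 0 < ε → N {e | ε < φ e} < ⊤)
    (hNinfty : N {e | φ e = ⊤} = 0)
    (H1 : ∀ ε : ℝ≥0∞, 0 < ε → ε ≠ ⊤ → N {e | φ e = ε} = 0 →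
      Filter.Tendsto (fun n => (c n : ℝ≥0∞) * Nn n {e | ε < φ e})
        Filter.atTop (nhds (N {e | ε < φ e})))
    (H2 : ∀ lam : ℝ, 0 < lam → ∀ ε : ℝ≥0∞, 0 < ε → ε ≠ ⊤ → N {e | φ e = ε} = 0 →
      Filter.Tendsto
        (fun n => (c n : ℝ≥0∞) * ∫⁻ e in {e | φ e ≤ ε}, oneMinusExpNeg lam (T e) ∂(Nn n))
        Filter.atTop (nhds (∫⁻ e in {e | φ e ≤ ε}, oneMinusExpNeg lam (T e) ∂N))) :
    ∀ lam : ℝ, 0 < lam →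
      Filter.Tendsto (fun n => (c n : ℝ≥0∞) * ∫⁻ e, oneMinusExpNeg lam (T e) ∂(Nn n))
        Filter.atTop (nhds (∫⁻ e, oneMinusExpNeg lam (T e) ∂N)) := by
  intro lam hlam
  have hf : ∀ e, oneMinusExpNeg lam (T e) ≤ 1 := fun e => oneMinusExpNeg_le_one _ _
  choose ε hε_gt hε_ne_top hε_null using fun k : ℕ =>
    exists_gt_measure_level_set_eq_zero hφ (a := k + 1) (by simp) (hfin _ (by simp)).ne
  have hε_pos : ∀ k, 0 < ε k := fun k => zero_le.trans_lt (hε_gt k)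
  have hcompl : ∀ k, {e | φ e ≤ ε k}ᶜ = {e | ε k < φ e} := fun k => by
    simp only [Set.compl_ofPred, not_le]
  have htail : Tendsto (fun k => N {e | ε k < φ e}) atTop (𝓝 0) := by
    refine tendsto_of_tendsto_of_tendsto_of_le_of_le tendsto_const_nhds
      (hNinfty ▸ tendsto_measure_natCast_lt hφ ⟨1, by simpa using (hfin 1 one_pos).ne⟩)
      (fun _ => zero_le) fun k => measure_mono fun e (he : ε k < φ e) => ?_
    exact (le_self_add.trans_lt (hε_gt k)).trans he
  refine ENNReal.tendsto_of_le_liminf_add_of_limsup_le_add htail (fun k => ?_) (fun k => ?_) <;>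
    rw [← hcompl]
  · exact lintegral_le_liminf_add_of_tendsto_setLIntegral hf (hφ measurableSet_Iic)
      (H2 lam hlam _ (hε_pos k) (hε_ne_top k) (hε_null k))
  · exact limsup_le_lintegral_add_of_tendsto_setLIntegral hf (hφ measurableSet_Iic)
      (H2 lam hlam _ (hε_pos k) (hε_ne_top k) (hε_null k))
      (hcompl k ▸ H1 _ (hε_pos k) (hε_ne_top k) (hε_null k))

/-- (H1) and (H2), together with `N(φ = +∞) = 0`, imply (H3):
`c_n N_n(1 − e^{−λT}) → N(1 − e^{−λT})` for every `λ > 0`. -/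
theorem statement15 {E : Type*} [MeasurableSpace E]
    (Nn : ℕ → Measure E) (hNn : ∀ n, IsFiniteMeasure (Nn n))
    (N : Measure E) (φ : E → ℝ≥0∞) (hφ : Measurable φ)
    (T : E → ℝ≥0∞) (hT : Measurable T)
    (c : ℕ → ℝ≥0) (hc : Filter.Tendsto c Filter.atTop Filter.atTop)
    (hfin : ∀ ε : ℝ≥0∞, 0 < ε → N {e | ε < φ e} < ⊤)
    (hNinfty : N {e | φ e = ⊤} = 0)
    (H1 : ∀ ε : ℝ≥0∞, 0 < ε → ε ≠ ⊤ → N {e | φ e = ε} = 0 →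
      Filter.Tendsto (fun n => (c n : ℝ≥0∞) * Nn n {e | ε < φ e})
        Filter.atTop (nhds (N {e | ε < φ e})))
    (H2 : ∀ lam : ℝ, 0 < lam → ∀ ε : ℝ≥0∞, 0 < ε → ε ≠ ⊤ → N {e | φ e = ε} = 0 →
      Filter.Tendsto
        (fun n => (c n : ℝ≥0∞) * ∫⁻ e in {e | φ e ≤ ε}, oneMinusExpNeg lam (T e) ∂(Nn n))
        Filter.atTop (nhds (∫⁻ e in {e | φ e ≤ ε}, oneMinusExpNeg lam (T e) ∂N))) :
    ∀ lam : ℝ, 0 < lam →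
      Filter.Tendsto (fun n => (c n : ℝ≥0∞) * ∫⁻ e, oneMinusExpNeg lam (T e) ∂(Nn n))
        Filter.atTop (nhds (∫⁻ e, oneMinusExpNeg lam (T e) ∂N)) :=
  statement15_general Nn N φ hφ T c hfin hNinfty H1 H2
end
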